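/- For every pair of distinct primes p and r with p ≡ r ≡ 1 (mod 3), decomposed in the standard way as p = π·π̄ and r = ρ·ρ̄, one has χ_p(r) = conj(χ_r(p)) · (π/ρ)₃². -/

import Mathlib

/-! ### The Eisenstein integers `ℤ[j]` -/

/-- The Eisenstein integers `ℤ[j]`: elements `a + b·ω` with `a b : ℤ`,
where `ω = j = (−1 + i√3)/2` satisfies `ω² + ω + 1 = 0`. -/
@[ext] structure Eisen where
  re : ℤ
  im : ℤ
deriving DecidableEq

namespace Eisen

instance : Zero Eisen := ⟨⟨0, 0⟩⟩
instance : One Eisen := ⟨⟨1, 0⟩⟩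
instance : Add Eisen := ⟨fun a b => ⟨a.re + b.re, a.im + b.im⟩⟩
instance : Neg Eisen := ⟨fun a => ⟨-a.re, -a.im⟩⟩
/-- `(a+bω)(c+dω) = (ac − bd) + (ad + bc − bd)ω`, using `ω² = −1 − ω`. -/
instance : Mul Eisen := ⟨fun a b =>
  ⟨a.re * b.re - a.im * b.im, a.re * b.im + a.im * b.re - a.im * b.im⟩⟩

@[simp] lemma zero_re : (0 : Eisen).re = 0 := rfl
@[simp] lemma zero_im : (0 : Eisen).im = 0 := rfl
@[simp] lemma one_re : (1 : Eisen).re = 1 := rfl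
@[simp] lemma one_im : (1 : Eisen).im = 0 := rfl
@[simp] lemma add_re (a b : Eisen) : (a + b).re = a.re + b.re := rfl
@[simp] lemma add_im (a b : Eisen) : (a + b).im = a.im + b.im := rfl
@[simp] lemma neg_re (a : Eisen) : (-a).re = -a.re := rfl
@[simp] lemma neg_im (a : Eisen) : (-a).im = -a.im := rfl
@[simp] lemma mul_re (a b : Eisen) : (a * b).re = a.re * b.re - a.im * b.im := rfl
@[simp] lemma mul_im (a b : Eisen) :
    (a * b).im = a.re * b.im + a.im * b.re - a.im * b.im := rfl

instance commRing : CommRing Eisen where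
  add_assoc a b c := by ext <;> simp <;> ring
  zero_add a := by ext <;> simp
  add_zero a := by ext <;> simp
  add_comm a b := by ext <;> simp <;> ring
  neg_add_cancel a := by ext <;> simp
  mul_assoc a b c := by ext <;> simp <;> ring
  one_mul a := by ext <;> simp
  mul_one a := by ext <;> simp
  left_distrib a b c := by ext <;> simp <;> ring
  right_distrib a b c := by ext <;> simp <;> ring
  zero_mul a := by ext <;> simp
  mul_zero a := by ext <;> simp
  mul_comm a b := by ext <;> simp <;> ring
  nsmul := nsmulRec
  zsmul := zsmulRec

/-- The root of unity `ω = j` as an Eisenstein integer. -/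
def ω : Eisen := ⟨0, 1⟩

/-- The complex number `j = (−1 + i√3)/2`. -/
noncomputable def jC : ℂ := ⟨-(1 / 2), Real.sqrt 3 / 2⟩

/-- The canonical embedding `ℤ[j] → ℂ`, sending `a + bω` to `a + b·j`. -/
noncomputable def toComplex (z : Eisen) : ℂ := (z.re : ℂ) + (z.im : ℂ) * jC

/-- The norm `N(z) = z·z̄ = a² − ab + b²` of an Eisenstein integer. -/
def normE (z : Eisen) : ℤ := z.re ^ 2 - z.re * z.im + z.im ^ 2

/-- `π` is a *standard prime*: a prime element of `ℤ[j]` that is primary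
(`π ≡ 2 mod 3`) and has positive imaginary part. These are exactly the elements
arising in the standard decomposition `p = π·π̄` of rational primes `p ≡ 1 (mod 3)`. -/
noncomputable def IsStandardPrime (π : Eisen) : Prop :=
  Prime π ∧ (3 : Eisen) ∣ (π - 2) ∧ 0 < (toComplex π).im

open scoped Classical in
/-- The cubic residue symbol `(α/π)₃ ∈ {1, j, j²}` (or `0` if `π ∣ α`):
the unique power `j^m` with `α^((N(π)−1)/3) ≡ j^m (mod π)`. -/
noncomputable def cubicSym (π α : Eisen) : ℂ :=
  if π ∣ α then 0
  else if π ∣ α ^ (((normE π).toNat - 1) / 3) - 1 then 1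
  else if π ∣ α ^ (((normE π).toNat - 1) / 3) - ω then jC
  else jC ^ 2

open scoped Classical in
/-- The standard prime above a rational prime `p ≡ 1 (mod 3)` (junk value `0` otherwise). -/
noncomputable def stdPrime (p : ℕ) : Eisen :=
  if h : ∃ π : Eisen, IsStandardPrime π ∧ normE π = p then h.choose else 0

end Eisen

/-! ### The cubic Dirichlet characters `χ_p` and the characters `χ(f)` -/

open Eisen

open scoped Classical in
/-- The cubic character `χ_3` modulo `9`, of order 3, normalized by `χ_3(2) = j`. -/
noncomputable def chi3 (n : ℤ) : ℂ :=
  if n % 9 = 1 ∨ n % 9 = 8 then 1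
  else if n % 9 = 2 ∨ n % 9 = 7 then jC
  else if n % 9 = 4 ∨ n % 9 = 5 then jC ^ 2
  else 0

open scoped Classical in
/-- The distinguished cubic character `χ_p` for `p ∈ 𝒫₃`: for `p ≡ 1 (mod 3)` it is
`χ_p(n) = (n/π)₃` with `π` the standard prime above `p`; for `p = 3` it is `χ_3`. -/
noncomputable def chiAt (p : ℕ) (n : ℤ) : ℂ :=
  if p = 3 then chi3 n else cubicSym (stdPrime p) (n : Eisen)

/-- `f` belongs to `V`: a finitely supported function `𝒫₃ → 𝔽₃`
(extended by zero off the set `𝒫₃ = {p prime : p ≡ 0, 1 (mod 3)}`). -/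
def IsV (f : ℕ → ZMod 3) : Prop :=
  {p | f p ≠ 0}.Finite ∧ ∀ p, f p ≠ 0 → p.Prime ∧ (p % 3 = 0 ∨ p % 3 = 1)

/-- `f` belongs to `V*`: it belongs to `V` and `f(3) = 0`. -/
def IsVstar (f : ℕ → ZMod 3) : Prop := IsV f ∧ f 3 = 0

/-- The Dirichlet character `χ(f) = ∏_{p ∈ 𝒫₃} χ_p^{f(p)}` attached to `f ∈ V`. -/
noncomputable def chiF (f : ℕ → ZMod 3) (n : ℤ) : ℂ :=
  ∏ᶠ p : ℕ, chiAt p n ^ (f p).val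

/-- `supp₃ f`: the support of `f` restricted to the primes `≡ 1 (mod 3)`. -/
def supp3 (f : ℕ → ZMod 3) : Set ℕ := {p | f p ≠ 0 ∧ p % 3 = 1}

/-- `Δ(f)`: the product of the primes in `supp₃ f`. -/
noncomputable def Deltaf (f : ℕ → ZMod 3) : ℕ := ∏ᶠ p ∈ supp3 f, p

open scoped Classical in
/-- The quantity `𝟙(f, f')`. -/
noncomputable def indicFF (f f' : ℕ → ZMod 3) : ℂ :=
  (3 : ℂ) ^ (-(Set.ncard (supp3 f ∪ supp3 f') : ℤ)) *
    ∏ r ∈ (Deltaf f * Deltaf f').primeFactors,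
      ∑ zz ∈ Finset.univ.filter
          (fun zz : ZMod 3 × ZMod 3 => f r * zz.1 + f' r * zz.2 = 0),
        chiF (fun p => zz.1 * f p + zz.2 * f' p) (r : ℤ)

/-!
Reduction modulo a prime `π` of norm `p ≡ 1 mod 3` identifies `ℤ[ω]/(π)` with `𝔽_p`, and the
cubic residue symbol becomes a multiplicative character `χ_π : 𝔽_p → ℤ[ω]` with values in
`{0, 1, ω, ω²}`. Its Jacobi sum `J(χ_π, χ_π)` is divisible by `π`, has norm `p` and is
`≡ -1 mod 3`, so it equals `π` when `π` is primary. Reducing `χ_π` modulo `ρ`, its Gauss sum `g`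
over a field of characteristic `r` satisfies `g³ = p·J = p·π` and, by Frobenius, `χ_π(r)·g^r = g`.
Hence `χ_π(r)·(p·π)^((r-1)/3) ≡ 1 mod ρ`, that is `χ_π(r)·χ_ρ(p)·χ_ρ(π) = 1`, and since these are
cube roots of unity this is the stated identity.
-/

lemma ZMod.exists_ne_zero_pow_ne_one {p : ℕ} [Fact p.Prime] {e : ℕ} (he0 : 0 < e)
    (he : e < p - 1) : ∃ x : ZMod p, x ≠ 0 ∧ x ^ e ≠ 1 := by
  obtain ⟨g, hg⟩ := IsCyclic.exists_generator (α := (ZMod p)ˣ)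
  refine ⟨g, g.ne_zero, fun h => ?_⟩
  have hord : orderOf g = p - 1 := by
    rw [orderOf_eq_card_of_forall_mem_zpowers hg, Nat.card_eq_fintype_card, ZMod.card_units]
  have hdvd : p - 1 ∣ e := hord ▸ orderOf_dvd_of_pow_eq_one (Units.ext (by push_cast; exact h))
  exact absurd (Nat.le_of_dvd he0 hdvd) (by omega)

lemma ZMod.natCast_ne_zero_of_ne {p q : ℕ} (hp : p.Prime) (hq : q.Prime) (h : p ≠ q) :
    (q : ZMod p) ≠ 0 := by
  rwa [Ne, ZMod.natCast_eq_zero_iff, Nat.prime_dvd_prime_iff_eq hp hq]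

lemma FiniteField.sum_pow_mul_one_sub_pow_eq_zero {F : Type*} [Field F] [Fintype F] {e : ℕ}
    (he : 2 * e < Fintype.card F - 1) : ∑ x : F, x ^ e * (1 - x) ^ e = 0 := by
  have expand (x : F) : x ^ e * (1 - x) ^ e =
      ∑ j ∈ Finset.range (e + 1), (-1) ^ j * (e.choose j : F) * x ^ (e + j) := by
    rw [sub_eq_add_neg, add_comm, add_pow, Finset.mul_sum]
    refine Finset.sum_congr rfl fun j _ => ?_
    rw [neg_pow]
    ring
  simp_rw [expand]
  rw [Finset.sum_comm]
  refine Finset.sum_eq_zero fun j hj => ?_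
  rw [← Finset.mul_sum, FiniteField.sum_pow_lt_card_sub_one F _ (by simp at hj; omega), mul_zero]

section GaussSum

variable {F K : Type*} [Field F] [Fintype F] [Field K] {χ : MulChar F K}

lemma gaussSum_pow_three {ψ : AddChar F K} (hχ3 : χ ^ 3 = 1) (hχ1 : χ ≠ 1)
    (hψ : ψ.IsPrimitive) : gaussSum χ ψ ^ 3 = Fintype.card F * jacobiSum χ χ := by
  have hord : orderOf χ = 3 := orderOf_eq_prime hχ3 hχ1
  have h := gaussSum_pow_eq_prod_jacobiSum (hord ▸ (by norm_num : 2 ≤ 3)) hψ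
  rw [hord, MulChar.val_neg_one_eq_one_of_odd_order (by decide) hχ3] at h
  simpa using h

lemma mul_gaussSum_pow_char (r : ℕ) [Fact r.Prime] [CharP K r] (hr : IsUnit (r : F))
    (hχr : χ ^ r = χ) (ψ : AddChar F K) : χ r * gaussSum χ ψ ^ r = gaussSum χ ψ := by
  rw [gaussSum_frob, hχr, AddChar.pow_mulShift, ← hr.unit_spec, gaussSum_mulShift]

end GaussSum

section CubicGaussSum

variable {p r : ℕ} [Fact p.Prime] [Fact r.Prime] {K : Type*} [Field K] [CharP K r]
  {χ : MulChar (ZMod p) K}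

/-- Comparing `g^r = g · (g^3)^((r-1)/3)` with the Frobenius `χ(r) g^r = g` for the Gauss sum
`g` of `χ`, where `g^3 = p J(χ, χ)`. -/
lemma apply_mul_jacobiSum_pow_eq_one_of_isPrimitive (hpr : p ≠ r) (hr3 : r % 3 = 1)
    (hχ3 : χ ^ 3 = 1) (hχ1 : χ ≠ 1) {ψ : AddChar (ZMod p) K} (hψ : ψ.IsPrimitive) :
    χ r * (p * jacobiSum χ χ) ^ ((r - 1) / 3) = 1 := by
  have hp : (p : K) ≠ 0 := by
    rw [Ne, CharP.cast_eq_zero_iff K r, Nat.prime_dvd_prime_iff_eq Fact.out Fact.out]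
    exact hpr.symm
  have hr : IsUnit (r : ZMod p) :=
    isUnit_iff_ne_zero.mpr (ZMod.natCast_ne_zero_of_ne Fact.out Fact.out hpr)
  have hr_eq : r = 3 * ((r - 1) / 3) + 1 := by omega
  have hχr : χ ^ r = χ := by rw [hr_eq, pow_succ, pow_mul, hχ3, one_pow, one_mul]
  have hg : gaussSum χ ψ ≠ 0 := gaussSum_ne_zero_of_nontrivial (by rwa [ZMod.card]) hχ1 hψ
  have hfrob := mul_gaussSum_pow_char r hr hχr ψ
  rw [hr_eq, pow_succ, pow_mul, gaussSum_pow_three hχ3 hχ1 hψ, ZMod.card, ← hr_eq] at hfrob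
  exact mul_left_cancel₀ hg (by linear_combination hfrob)

lemma apply_mul_jacobiSum_pow_eq_one (hpr : p ≠ r) (hr3 : r % 3 = 1) (hχ3 : χ ^ 3 = 1)
    (hχ1 : χ ≠ 1) : χ r * (p * jacobiSum χ χ) ^ ((r - 1) / 3) = 1 := by
  have hchar : ringChar K ≠ ringChar (ZMod p) := by
    rw [ringChar.eq K r, ZMod.ringChar_zmod_n]
    exact hpr.symm
  let ψ := AddChar.FiniteField.primitiveChar (ZMod p) K hchar
  let f := algebraMap K (CyclotomicField ψ.n K)
  have : CharP (CyclotomicField ψ.n K) r := charP_of_injective_algebraMap f.injective r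
  apply f.injective
  rw [map_one, map_mul, map_pow, map_mul, map_natCast f p, ← MulChar.ringHomComp_apply,
    ← jacobiSum_ringHomComp]
  refine apply_mul_jacobiSum_pow_eq_one_of_isPrimitive hpr hr3 ?_ ?_ ψ.prim
  · rw [MulChar.ringHomComp_pow, hχ3, MulChar.ringHomComp_one]
  · exact (MulChar.ringHomComp_ne_one_iff f.injective).mpr hχ1

end CubicGaussSum

namespace Eisen

def conj (z : Eisen) : Eisen := ⟨z.re - z.im, -z.im⟩

lemma intCast_def (n : ℤ) : (n : Eisen) = ⟨n, 0⟩ := by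
  induction n using Int.induction_on with
  | zero => rfl
  | succ k ih => rw [Int.cast_add, Int.cast_one, ih]; ext <;> simp
  | pred k ih => rw [Int.cast_sub, Int.cast_one, ih]; ext <;> simp [sub_eq_add_neg]

lemma mul_conj (z : Eisen) : z * conj z = normE z := by
  rw [intCast_def]
  ext <;> simp [conj, normE] <;> ring

lemma normE_mul (z w : Eisen) : normE (z * w) = normE z * normE w := by
  simp only [normE, mul_re, mul_im]
  ring

lemma normE_dvd_normE {z w : Eisen} (h : z ∣ w) : normE z ∣ normE w := by
  obtain ⟨t, rfl⟩ := h
  exact ⟨normE t, normE_mul z t⟩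

lemma omega_pow_three : ω ^ 3 = 1 := by
  ext <;> simp [pow_succ, ω]

lemma isPrimitiveRoot_omega : IsPrimitiveRoot ω 3 := by
  refine IsPrimitiveRoot.mk_of_lt ω (by norm_num) omega_pow_three fun l hl0 hl3 h => ?_
  interval_cases l <;> simp [pow_succ, ω, Eisen.ext_iff] at h

lemma orderOf_omega : orderOf ω = 3 := isPrimitiveRoot_omega.eq_orderOf.symm

lemma normE_omega_pow (k : ℕ) : normE (ω ^ k) = 1 := by
  induction k with
  | zero => rfl
  | succ k ih => rw [pow_succ, normE_mul, ih]; rfl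

lemma three_dvd_iff {z : Eisen} : (3 : Eisen) ∣ z ↔ (3 : ℤ) ∣ z.re ∧ (3 : ℤ) ∣ z.im := by
  have h3 : (3 : Eisen) = ⟨3, 0⟩ := by exact_mod_cast intCast_def 3
  constructor
  · rintro ⟨w, rfl⟩
    exact ⟨⟨w.re, by simp [h3]⟩, ⟨w.im, by simp [h3]⟩⟩
  · rintro ⟨⟨a, ha⟩, ⟨b, hb⟩⟩
    exact ⟨⟨a, b⟩, by ext <;> simp [h3, ha, hb]⟩

lemma eq_one_of_normE_eq_one {t : Eisen} (ht : normE t = 1) (h3 : (3 : Eisen) ∣ t - 1) :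
    t = 1 := by
  obtain ⟨⟨a, ha⟩, ⟨b, hb⟩⟩ := three_dvd_iff.mp h3
  simp only [sub_eq_add_neg, add_re, add_im, neg_re, neg_im, one_re, one_im, neg_zero,
    add_zero] at ha hb
  unfold normE at ht
  have hb0 : b = 0 := by
    have : -1 < b ∧ b < 1 := by constructor <;> nlinarith [sq_nonneg (2 * t.re - t.im)]
    omega
  have ha0 : a = 0 := by
    have : -1 < a ∧ a < 1 := by constructor <;> nlinarith
    omega
  ext <;> simp only [one_re, one_im] <;> omega

lemma jC_sq_add_jC_add_one : jC ^ 2 + jC + 1 = 0 := by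
  have h3 : Real.sqrt 3 ^ 2 = 3 := Real.sq_sqrt (by norm_num)
  apply Complex.ext
  · simp [pow_two, jC]
    linarith
  · simp [pow_two, jC]
    ring

noncomputable def toC : Eisen →+* ℂ where
  toFun := toComplex
  map_one' := by simp [toComplex]
  map_mul' z w := by
    simp only [toComplex, mul_re, mul_im]
    push_cast
    linear_combination (-(z.im * w.im) : ℂ) * jC_sq_add_jC_add_one
  map_zero' := by simp [toComplex]
  map_add' z w := by
    simp only [toComplex, add_re, add_im]
    push_cast
    ring

lemma toC_apply (z : Eisen) : toC z = z.re + z.im * jC := rfl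

lemma toC_omega : toC ω = jC := by simp [toC_apply, ω]

lemma toC_injective : Function.Injective toC := by
  intro z w h
  have him := congrArg Complex.im h
  have hre := congrArg Complex.re h
  simp only [toC_apply, jC, Complex.add_im, Complex.add_re, Complex.mul_im, Complex.mul_re,
    Complex.intCast_re, Complex.intCast_im] at him hre
  have h3 : (0 : ℝ) < Real.sqrt 3 := by positivity
  have hi : z.im = w.im := by
    have : (z.im : ℝ) = w.im := by nlinarith
    exact_mod_cast this
  have hr : (z.re : ℝ) = w.re := by rw [hi] at hre; linarith
  ext
  · exact_mod_cast hr
  · exact hi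

instance : IsDomain Eisen := toC_injective.isDomain toC

lemma toC_conj (z : Eisen) : toC (conj z) = starRingEnd ℂ (toC z) := by
  apply Complex.ext <;> simp [toC_apply, conj, jC]
  ring

section Residue

variable {p : ℕ} {π : Eisen}

/-- The class of `ω` modulo `π = a + bω`, namely `-a/b`. -/
noncomputable def cval (π : Eisen) (p : ℕ) : ZMod p := -(π.re : ZMod p) * (π.im : ZMod p)⁻¹

variable [Fact p.Prime] (hn : normE π = p)
include hn

lemma not_dvd_im : ¬ (p : ℤ) ∣ π.im := by
  have hp : Prime (p : ℤ) := Nat.prime_iff_prime_int.mp Fact.out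
  have hn' : π.re ^ 2 - π.re * π.im + π.im ^ 2 = p := hn
  rintro ⟨b, hb⟩
  have hre : (p : ℤ) ∣ π.re := by
    refine hp.dvd_of_dvd_pow (n := 2) ⟨1 + π.re * b - p * b ^ 2, ?_⟩
    linear_combination hn' + (π.re - π.im - p * b) * hb
  obtain ⟨a, ha⟩ := hre
  have h1 : (p : ℤ) * (p * (a ^ 2 - a * b + b ^ 2)) = p * 1 := by
    linear_combination hn' - (π.re + p * a - π.im) * ha - (π.im + p * b - p * a) * hb
  exact hp.not_dvd_one ⟨_, (mul_left_cancel₀ hp.ne_zero h1).symm⟩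

lemma intCast_im_ne_zero : (π.im : ZMod p) ≠ 0 := by
  rw [Ne, ZMod.intCast_zmod_eq_zero_iff_dvd]
  exact not_dvd_im hn

lemma cval_sq_add_cval_add_one : cval π p ^ 2 + cval π p + 1 = 0 := by
  have hn' : ((π.re ^ 2 - π.re * π.im + π.im ^ 2 : ℤ) : ZMod p) = 0 := by
    rw [show π.re ^ 2 - π.re * π.im + π.im ^ 2 = p from hn]
    simp
  push_cast at hn'
  have := intCast_im_ne_zero hn
  rw [cval]
  field_simp
  linear_combination hn'

noncomputable def residue : Eisen →+* ZMod p where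
  toFun z := z.re + z.im * cval π p
  map_one' := by simp
  map_zero' := by simp
  map_add' z w := by push_cast [add_re, add_im]; ring
  map_mul' z w := by
    push_cast [mul_re, mul_im]
    linear_combination -((z.im : ZMod p) * w.im) * cval_sq_add_cval_add_one hn

lemma residue_apply (z : Eisen) : residue hn z = z.re + z.im * cval π p := rfl

lemma residue_omega : residue hn ω = cval π p := by simp [residue_apply, ω]

lemma residue_self : residue hn π = 0 := by
  have := intCast_im_ne_zero hn
  rw [residue_apply, cval]
  field_simp
  ring

lemma dvd_intCast_of_residue_eq_zero {n : ℤ} (h : residue hn n = 0) : π ∣ (n : Eisen) := by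
  rw [map_intCast, ZMod.intCast_zmod_eq_zero_iff_dvd] at h
  obtain ⟨m, rfl⟩ := h
  exact ⟨conj π * m, by rw [← mul_assoc, mul_conj, hn]; push_cast; ring⟩

lemma not_dvd_intCast_im : ¬ π ∣ (π.im : Eisen) := by
  intro h
  have h2 := normE_dvd_normE h
  rw [hn, intCast_def, normE] at h2
  simp only [mul_zero, sub_zero, zero_pow two_ne_zero, add_zero] at h2
  exact not_dvd_im hn ((Nat.prime_iff_prime_int.mp Fact.out).dvd_of_dvd_pow h2)

lemma dvd_of_residue_eq_zero (hπ : Prime π) {z : Eisen} (hz : residue hn z = 0) : π ∣ z := by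
  -- `ω ≡ c mod π` for an integer `c`, so every `z` is an integer modulo `π`
  set c : ℤ := ((cval π p).val : ℤ)
  have hc : residue hn (ω - c) = 0 := by simp [residue_omega, c]
  have hint (z : Eisen) : ((z.re + z.im * c : ℤ) : Eisen) = z - z.im * (ω - c) := by
    ext <;> simp [intCast_def, ω, sub_eq_add_neg]
  have hint_dvd {z : Eisen} (hz : residue hn z = 0) : π ∣ ((z.re + z.im * c : ℤ) : Eisen) := by
    apply dvd_intCast_of_residue_eq_zero hn
    rw [hint, map_sub, map_mul, hz, hc, mul_zero, sub_zero]
  have hω : π ∣ ω - c := by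
    refine ((hπ.dvd_or_dvd ?_).resolve_left (not_dvd_intCast_im hn))
    rw [show (π.im : Eisen) * (ω - c) = π - ((π.re + π.im * c : ℤ) : Eisen) by rw [hint]; ring]
    exact dvd_sub dvd_rfl (hint_dvd (residue_self hn))
  rw [← sub_add_cancel z (z.im * (ω - c)), ← hint]
  exact dvd_add (hint_dvd hz) (dvd_mul_of_dvd_right hω _)

lemma residue_eq_zero_iff (hπ : Prime π) {z : Eisen} : residue hn z = 0 ↔ π ∣ z := by
  refine ⟨dvd_of_residue_eq_zero hn hπ, ?_⟩
  rintro ⟨t, rfl⟩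
  rw [map_mul, residue_self hn, zero_mul]

end Residue

section CubicCharacter

variable {p : ℕ} [Fact p.Prime] {π : Eisen} (hn : normE π = p) (hp3 : p % 3 = 1)

noncomputable def cubicIndex (π : Eisen) (p : ℕ) (x : ZMod p) : ℕ :=
  if x ^ ((p - 1) / 3) = 1 then 0 else if x ^ ((p - 1) / 3) = cval π p then 1 else 2

include hn hp3

lemma cval_ne_one : cval π p ≠ 1 := by
  intro h
  have h3 := cval_sq_add_cval_add_one hn
  rw [h] at h3
  have : ((3 : ℕ) : ZMod p) = 0 := by push_cast; linear_combination h3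
  rw [ZMod.natCast_eq_zero_iff] at this
  have := (Nat.prime_dvd_prime_iff_eq Fact.out Nat.prime_three).mp this
  omega

lemma orderOf_cval : orderOf (cval π p) = 3 :=
  orderOf_eq_prime (by linear_combination (cval π p - 1) * cval_sq_add_cval_add_one hn)
    (cval_ne_one hn hp3)

lemma omega_pow_eq_omega_pow_of_residue {i j : ℕ}
    (h : residue hn (ω ^ i) = residue hn (ω ^ j)) : ω ^ i = ω ^ j := by
  rw [map_pow, map_pow, residue_omega,
    (orderOf_pos_iff.mp (by rw [orderOf_cval hn hp3]; norm_num)).pow_eq_pow_iff_modEq,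
    orderOf_cval hn hp3] at h
  rwa [(orderOf_pos_iff.mp (by rw [orderOf_omega]; norm_num)).pow_eq_pow_iff_modEq,
    orderOf_omega]

lemma cval_pow_cubicIndex {x : ZMod p} (hx : x ≠ 0) :
    cval π p ^ cubicIndex π p x = x ^ ((p - 1) / 3) := by
  unfold cubicIndex
  set y := x ^ ((p - 1) / 3)
  set c := cval π p
  have hy : y ^ 3 = 1 := by
    rw [← pow_mul, Nat.div_mul_cancel (by omega), ZMod.pow_card_sub_one_eq_one hx]
  have hc := cval_sq_add_cval_add_one hn
  have hroots : (y - 1) * (y - c) * (y - c ^ 2) = 0 := by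
    linear_combination hy + (y - y ^ 2 + (y - 1) * (c - 1)) * hc
  split_ifs with h1 h2
  · rw [pow_zero, h1]
  · rw [pow_one, h2]
  · simp only [mul_eq_zero, sub_eq_zero] at hroots
    tauto

noncomputable def chiPi : MulChar (ZMod p) Eisen where
  toFun x := if x = 0 then 0 else ω ^ cubicIndex π p x
  map_one' := by simp [cubicIndex]
  map_mul' x y := by
    rcases eq_or_ne x 0 with rfl | hx
    · simp
    rcases eq_or_ne y 0 with rfl | hy
    · simp
    simp only [mul_ne_zero hx hy, hx, hy, if_false]
    rw [← pow_add]
    apply omega_pow_eq_omega_pow_of_residue hn hp3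
    rw [map_pow, map_pow, residue_omega, pow_add, cval_pow_cubicIndex hn hp3 hx,
      cval_pow_cubicIndex hn hp3 hy, cval_pow_cubicIndex hn hp3 (mul_ne_zero hx hy), mul_pow]
  map_nonunit' x hx := by simp [not_not.mp (mt isUnit_iff_ne_zero.mpr hx)]

lemma chiPi_apply_of_ne_zero {x : ZMod p} (hx : x ≠ 0) :
    chiPi hn hp3 x = ω ^ cubicIndex π p x :=
  if_neg hx

lemma residue_chiPi (x : ZMod p) : residue hn (chiPi hn hp3 x) = x ^ ((p - 1) / 3) := by
  rcases eq_or_ne x 0 with rfl | hx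
  · rw [MulChar.map_zero, map_zero, zero_pow]
    have := (Fact.out : p.Prime).two_le
    omega
  · rw [chiPi_apply_of_ne_zero hn hp3 hx, map_pow, residue_omega, cval_pow_cubicIndex hn hp3 hx]

lemma chiPi_pow_three : chiPi hn hp3 ^ 3 = 1 := by
  refine MulChar.ext fun a => ?_
  rw [MulChar.pow_apply' _ three_ne_zero, MulChar.one_apply_coe,
    chiPi_apply_of_ne_zero hn hp3 a.ne_zero, ← pow_mul, mul_comm, pow_mul, omega_pow_three,
    one_pow]

lemma chiPi_ne_one : chiPi hn hp3 ≠ 1 := by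
  have := (Fact.out : p.Prime).two_le
  obtain ⟨x, hx, hxe⟩ := ZMod.exists_ne_zero_pow_ne_one (p := p) (e := (p - 1) / 3)
    (by omega) (by omega)
  intro h
  apply hxe
  rw [← residue_chiPi hn hp3, h, MulChar.one_apply (isUnit_iff_ne_zero.mpr hx), map_one]

lemma orderOf_chiPi : orderOf (chiPi hn hp3) = 3 :=
  orderOf_eq_prime (chiPi_pow_three hn hp3) (chiPi_ne_one hn hp3)

lemma chiPi_mul_conj {x : ZMod p} (hx : x ≠ 0) : chiPi hn hp3 x * conj (chiPi hn hp3 x) = 1 := by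
  rw [mul_conj, chiPi_apply_of_ne_zero hn hp3 hx, normE_omega_pow, Int.cast_one]

lemma chiPi_apply_pow_three {x : ZMod p} (hx : x ≠ 0) : chiPi hn hp3 x ^ 3 = 1 := by
  rw [← MulChar.pow_apply' _ three_ne_zero, chiPi_pow_three,
    MulChar.one_apply (isUnit_iff_ne_zero.mpr hx)]

lemma cubicSym_eq_toC_chiPi (hπ : Prime π) (α : Eisen) :
    cubicSym π α = toC (chiPi hn hp3 (residue hn α)) := by
  have he : ((normE π).toNat - 1) / 3 = (p - 1) / 3 := by rw [hn]; simp
  have hdvd (β : Eisen) :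
      π ∣ α ^ ((p - 1) / 3) - β ↔ residue hn α ^ ((p - 1) / 3) = residue hn β := by
    rw [← residue_eq_zero_iff hn hπ, map_sub, map_pow, sub_eq_zero]
  unfold cubicSym
  simp only [he, hdvd, map_one, residue_omega]
  by_cases h0 : π ∣ α
  · rw [if_pos h0, (residue_eq_zero_iff hn hπ).mpr h0, MulChar.map_zero, map_zero]
  · rw [if_neg h0, chiPi_apply_of_ne_zero hn hp3 (mt (residue_eq_zero_iff hn hπ).mp h0)]
    unfold cubicIndex
    split_ifs <;> simp [toC_omega]

end CubicCharacter

section JacobiSum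

variable {p : ℕ} [Fact p.Prime] {π : Eisen} (hn : normE π = p) (hp3 : p % 3 = 1)
include hn hp3

lemma residue_jacobiSum_chiPi : residue hn (jacobiSum (chiPi hn hp3) (chiPi hn hp3)) = 0 := by
  have := (Fact.out : p.Prime).two_le
  rw [jacobiSum, map_sum]
  simp_rw [map_mul, residue_chiPi]
  exact FiniteField.sum_pow_mul_one_sub_pow_eq_zero (by rw [ZMod.card]; omega)

lemma normE_jacobiSum_chiPi : normE (jacobiSum (chiPi hn hp3) (chiPi hn hp3)) = p := by
  set χ := (chiPi hn hp3).ringHomComp toC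
  have hχ : χ ≠ 1 := (MulChar.ringHomComp_ne_one_iff toC_injective).mpr (chiPi_ne_one hn hp3)
  have hχχ : χ * χ ≠ 1 := by
    rw [← MulChar.ringHomComp_mul, Ne, MulChar.ringHomComp_eq_one_iff toC_injective, ← sq]
    exact pow_ne_one_of_lt_orderOf two_ne_zero (by rw [orderOf_chiPi hn hp3]; norm_num)
  have hchar : ringChar ℂ ≠ ringChar (ZMod p) := by
    rw [ringChar.eq_zero, ZMod.ringChar_zmod_n]
    exact (Fact.out : p.Prime).ne_zero.symm
  have key := jacobiSum_mul_jacobiSum_inv hchar hχ hχ hχχ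
  have hinv : jacobiSum χ⁻¹ χ⁻¹ = starRingEnd ℂ (jacobiSum χ χ) := by
    simp only [jacobiSum, map_sum, map_mul, starRingEnd_apply, MulChar.star_apply']
  rw [hinv, jacobiSum_ringHomComp, ← toC_conj, ← map_mul, mul_conj, map_intCast,
    ZMod.card] at key
  exact_mod_cast key

lemma three_dvd_jacobiSum_chiPi_add_one :
    (3 : Eisen) ∣ jacobiSum (chiPi hn hp3) (chiPi hn hp3) + 1 := by
  obtain ⟨z, -, hz⟩ := exists_jacobiSum_eq_neg_one_add (by norm_num : 2 < 3)
    (chiPi_pow_three hn hp3) (chiPi_pow_three hn hp3) (by rw [ZMod.card]; omega)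
    isPrimitiveRoot_omega
  have hω : (ω - 1) ^ 2 = -3 * ω := by
    rw [show (3 : Eisen) = ((3 : ℤ) : Eisen) by norm_num, intCast_def]
    ext <;> simp [pow_two, ω, sub_eq_add_neg]
  exact ⟨-(z * ω), by rw [hz, hω]; ring⟩

/-- `J = π t` with `t` a unit (compare norms) and `t ≡ 1 mod 3` (since `J ≡ -1` and `π ≡ 2`). -/
lemma jacobiSum_chiPi_eq (hπ : Prime π) (hprim : (3 : Eisen) ∣ π - 2) :
    jacobiSum (chiPi hn hp3) (chiPi hn hp3) = π := by
  obtain ⟨t, ht⟩ := dvd_of_residue_eq_zero hn hπ (residue_jacobiSum_chiPi hn hp3)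
  have ht_norm : normE t = 1 := by
    have h := normE_jacobiSum_chiPi hn hp3
    rw [ht, normE_mul, hn] at h
    exact (mul_eq_left₀ (by exact_mod_cast (Fact.out : p.Prime).ne_zero)).mp h
  have ht_three : (3 : Eisen) ∣ t - 1 := by
    rw [show t - 1 = t * (π - 2) + 3 * t - (jacobiSum (chiPi hn hp3) (chiPi hn hp3) + 1) by
      rw [ht]; ring]
    exact dvd_sub (dvd_add (dvd_mul_of_dvd_right hprim t) (dvd_mul_right 3 t))
      (three_dvd_jacobiSum_chiPi_add_one hn hp3)
  rw [ht, eq_one_of_normE_eq_one ht_norm ht_three, mul_one]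

end JacobiSum

section Reciprocity

variable {p r : ℕ} [Fact p.Prime] [Fact r.Prime] {π ρ : Eisen} (hpr : p ≠ r)
  (hπ : normE π = p) (hp3 : p % 3 = 1) (hρ : normE ρ = r) (hr3 : r % 3 = 1)

include hpr in
lemma residue_chiPi_mul_chiPi_mul_chiPi (hπ_prime : Prime π)
    (hπ_primary : (3 : Eisen) ∣ π - 2) :
    residue hρ (chiPi hπ hp3 r * (chiPi hρ hr3 p * chiPi hρ hr3 (residue hρ π))) = 1 := by
  let χ := (chiPi hπ hp3).ringHomComp (residue hρ)
  have hχ3 : χ ^ 3 = 1 := by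
    rw [MulChar.ringHomComp_pow, chiPi_pow_three, MulChar.ringHomComp_one]
  have hχ1 : χ ≠ 1 := by
    intro h
    refine chiPi_ne_one hπ hp3 (MulChar.ext fun a => ?_)
    rw [MulChar.one_apply_coe, chiPi_apply_of_ne_zero _ _ a.ne_zero, ← pow_zero ω]
    apply omega_pow_eq_omega_pow_of_residue hρ hr3
    rw [← chiPi_apply_of_ne_zero _ _ a.ne_zero, ← MulChar.ringHomComp_apply, pow_zero, map_one]
    exact congrArg (· a) h |>.trans (MulChar.one_apply_coe a)
  have key := apply_mul_jacobiSum_pow_eq_one hpr hr3 hχ3 hχ1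
  rw [jacobiSum_ringHomComp, jacobiSum_chiPi_eq hπ hp3 hπ_prime hπ_primary, mul_pow,
    MulChar.ringHomComp_apply] at key
  rw [map_mul, map_mul, residue_chiPi, residue_chiPi, ← key]

include hpr in
theorem chiPi_reciprocity (hπ_prime : Prime π) (hπ_primary : (3 : Eisen) ∣ π - 2)
    (hρ_prime : Prime ρ) :
    chiPi hπ hp3 r = conj (chiPi hρ hr3 p) * chiPi hρ hr3 (residue hρ π) ^ 2 := by
  have hr0 : (r : ZMod p) ≠ 0 := ZMod.natCast_ne_zero_of_ne Fact.out Fact.out hpr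
  have hp0 : (p : ZMod r) ≠ 0 := ZMod.natCast_ne_zero_of_ne Fact.out Fact.out hpr.symm
  have hπ0 : residue hρ π ≠ 0 := by
    rw [Ne, residue_eq_zero_iff hρ hρ_prime]
    intro h
    have h' := normE_dvd_normE h
    rw [hρ, hπ, Int.natCast_dvd_natCast, Nat.prime_dvd_prime_iff_eq Fact.out Fact.out] at h'
    exact hpr h'.symm
  obtain ⟨k, hk⟩ : ∃ k,
      chiPi hπ hp3 r * (chiPi hρ hr3 p * chiPi hρ hr3 (residue hρ π)) = ω ^ k := by
    rw [chiPi_apply_of_ne_zero _ _ hr0, chiPi_apply_of_ne_zero _ _ hp0,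
      chiPi_apply_of_ne_zero _ _ hπ0, ← pow_add, ← pow_add]
    exact ⟨_, rfl⟩
  have hprod : chiPi hπ hp3 r * (chiPi hρ hr3 p * chiPi hρ hr3 (residue hρ π)) = 1 := by
    rw [hk, ← pow_zero ω]
    apply omega_pow_eq_omega_pow_of_residue hρ hr3
    rw [← hk, residue_chiPi_mul_chiPi_mul_chiPi hpr hπ hp3 hρ hr3 hπ_prime hπ_primary, pow_zero,
      map_one]
  -- with `u, v, w` the factors in `hprod`: `u = u (v v̄) w³ = (u v w) v̄ w²`
  linear_combination (-(chiPi hπ hp3 r * chiPi hρ hr3 (residue hρ π) ^ 3)) *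
      chiPi_mul_conj hρ hr3 hp0 - chiPi hπ hp3 r * chiPi_apply_pow_three hρ hr3 hπ0 +
    conj (chiPi hρ hr3 p) * chiPi hρ hr3 (residue hρ π) ^ 2 * hprod

end Reciprocity

end Eisen

open Eisen in
/-- **Cubic reciprocity for the distinguished characters.**
For distinct primes `p, r ≡ 1 (mod 3)` with standard decompositions `p = π·π̄` and
`r = ρ·ρ̄`, one has `χ_p(r) = conj(χ_r(p)) · (π/ρ)₃²`. -/
theorem chiP_reciprocity (p r : ℕ) (hp : p.Prime) (hr : r.Prime) (hpr : p ≠ r)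
    (hp3 : p % 3 = 1) (hr3 : r % 3 = 1) (π ρ : Eisen)
    (hπ : IsStandardPrime π) (hρ : IsStandardPrime ρ)
    (hπp : normE π = (p : ℤ)) (hρr : normE ρ = (r : ℤ)) :
    cubicSym π ((r : ℤ) : Eisen) =
      (starRingEnd ℂ) (cubicSym ρ ((p : ℤ) : Eisen)) * (cubicSym ρ π) ^ 2 := by
  have : Fact p.Prime := ⟨hp⟩
  have : Fact r.Prime := ⟨hr⟩
  obtain ⟨hπ_prime, hπ_primary, -⟩ := hπ
  simp only [cubicSym_eq_toC_chiPi hπp hp3 hπ_prime, cubicSym_eq_toC_chiPi hρr hr3 hρ.1,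
    Int.cast_natCast, map_natCast]
  rw [chiPi_reciprocity hpr hπp hp3 hρr hr3 hπ_prime hπ_primary hρ.1, map_mul, map_pow, toC_conj]
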